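/- arXiv:1802.03960 — 3 statements merged into one kernel-verified Lean document; each statement's English description precedes it below -/
import Mathlib

section
/- For all real x in [0,1] and all real y ≥ 0, we have 1 - (1-x)^y ≥ x·y·(1 - x·y). -/
/-!
Bound `(1 - x) ^ y` above by `exp (-(x * y))` using `1 - x ≤ exp (-x)`, then bound
`exp (-u)` above by `1 - u + u ^ 2` for `u = x * y ≥ 0`.
-/

open Real

/-- Multiplying `1 + u ≤ exp u` by `1 - u + u ^ 2 > 0` gives `1 + u ^ 3 ≤ exp u * (1 - u + u ^ 2)`. -/
lemma Real.exp_neg_le_one_sub_add_sq {u : ℝ} (hu : 0 ≤ u) : exp (-u) ≤ 1 - u + u ^ 2 := by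
  have hexp : u + 1 ≤ exp u := add_one_le_exp u
  rw [exp_neg, inv_le_iff_one_le_mul₀ (exp_pos u)]
  nlinarith [sq_nonneg (1 - u), pow_nonneg hu 3]

lemma Real.one_sub_rpow_le_exp_neg_mul {x y : ℝ} (hx : x ≤ 1) (hy : 0 ≤ y) :
    (1 - x) ^ y ≤ exp (-(x * y)) :=
  calc (1 - x) ^ y ≤ exp (-x) ^ y := rpow_le_rpow (by linarith) (one_sub_le_exp_neg x) hy
    _ = exp (-(x * y)) := by rw [← exp_mul, neg_mul]

theorem stmt1 (x y : ℝ) (hx : x ∈ Set.Icc (0:ℝ) 1) (hy : 0 ≤ y) :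
    1 - (1 - x) ^ y ≥ x * y * (1 - x * y) := by
  have hpow := one_sub_rpow_le_exp_neg_mul hx.2 hy
  have hexp := exp_neg_le_one_sub_add_sq (mul_nonneg hx.1 hy)
  linarith
end

section
/- Let (X_i)_{i=1}^k and (Y_i)_{i=1}^k be random variables such that the family (X_1,...,X_k) is independent of the family (Y_1,...,Y_k), and all Y_i have the same distribution. Then for every real x, P(max_{1≤i≤k} (X_i + Y_i) ≤ x) ≤ P(max_{1≤i≤k} (X_i + Y_1) ≤ x). Equivalently, max_i (X_i + Y_1) is stochastically dominated by max_i (X_i + Y_i). -/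
open MeasureTheory ProbabilityTheory

/- Conditioning on `X = v`, the event `∀ i, v i + Y i ≤ x` is contained in `v j + Y j ≤ x` for an
index `j` maximizing `v`; since `Y j` and `Y i₀` have the same law, that event has the probability
of `v j + Y i₀ ≤ x`, which is exactly `∀ i, v i + Y i₀ ≤ x`. -/

theorem ProbabilityTheory.IndepFun.measure_preimage_eq_lintegral {Ω α β : Type*}
    [MeasurableSpace Ω] [MeasurableSpace α] [MeasurableSpace β] {μ : Measure Ω} [IsFiniteMeasure μ]
    {V : Ω → α} {W : Ω → β} (hV : AEMeasurable V μ) (hW : AEMeasurable W μ)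
    (hVW : IndepFun V W μ) {s : Set (α × β)} (hs : MeasurableSet s) :
    μ ((fun ω => (V ω, W ω)) ⁻¹' s) = ∫⁻ v, μ.map W (Prod.mk v ⁻¹' s) ∂μ.map V := by
  rw [← Measure.map_apply_of_aemeasurable (hV.prodMk hW) hs,
    hVW.map_prod_eq_prod_map_map hV hW, Measure.prod_apply hs]

theorem measure_forall_add_le_le_of_map_eval_eq {ι : Type*} [Finite ι] {ρ : Measure (ι → ℝ)}
    {i₀ : ι} (hρ : ∀ i, ρ.map (fun w => w i) = ρ.map (fun w => w i₀)) (v : ι → ℝ) (x : ℝ) :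
    ρ {w | ∀ i, v i + w i ≤ x} ≤ ρ {w | ∀ i, v i + w i₀ ≤ x} := by
  have : Nonempty ι := ⟨i₀⟩
  obtain ⟨j, hj⟩ := Finite.exists_max v
  have hcoord : ∀ i, ρ {w | w i ≤ x - v j} = ρ.map (fun w => w i) (Set.Iic (x - v j)) := fun i =>
    (Measure.map_apply (measurable_pi_apply i) measurableSet_Iic).symm
  calc ρ {w | ∀ i, v i + w i ≤ x} ≤ ρ {w | w j ≤ x - v j} :=
        measure_mono fun w hw => le_sub_iff_add_le'.mpr (hw j)
    _ = ρ {w | w i₀ ≤ x - v j} := by rw [hcoord, hcoord, hρ]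
    _ = ρ {w | ∀ i, v i + w i₀ ≤ x} := by
        congr 1
        ext w
        simp only [Set.mem_ofPred_eq, le_sub_iff_add_le']
        exact ⟨fun hw i => by linarith [hj i], fun hw => hw j⟩

theorem stmt5 {Ω : Type*} [MeasurableSpace Ω] (μ : Measure Ω) [IsProbabilityMeasure μ]
    (k : ℕ) (hk : 0 < k) (X Y : Fin k → Ω → ℝ)
    (hX : ∀ i, Measurable (X i)) (hY : ∀ i, Measurable (Y i))
    (hindep : IndepFun (fun ω i => X i ω) (fun ω i => Y i ω) μ)
    (hid : ∀ i, Measure.map (Y i) μ = Measure.map (Y ⟨0, hk⟩) μ)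
    (x : ℝ) :
    μ {ω | ∀ i, X i ω + Y i ω ≤ x} ≤ μ {ω | ∀ i, X i ω + Y ⟨0, hk⟩ ω ≤ x} := by
  have hV : Measurable fun ω i => X i ω := measurable_pi_lambda _ hX
  have hW : Measurable fun ω i => Y i ω := measurable_pi_lambda _ hY
  have hmarginal : ∀ i, (μ.map fun ω i => Y i ω).map (fun w => w i) = μ.map (Y i) := fun i =>
    Measure.map_map (measurable_pi_apply i) hW
  have hs : ∀ f : Fin k → Fin k,
      MeasurableSet {p : (Fin k → ℝ) × (Fin k → ℝ) | ∀ i, p.1 i + p.2 (f i) ≤ x} := fun f => by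
    simp only [Set.ofPred_forall]
    exact MeasurableSet.iInter fun i => measurableSet_le (by fun_prop) measurable_const
  calc μ {ω | ∀ i, X i ω + Y i ω ≤ x}
      = ∫⁻ v, (μ.map fun ω i => Y i ω) {w | ∀ i, v i + w i ≤ x} ∂μ.map fun ω i => X i ω :=
        hindep.measure_preimage_eq_lintegral hV.aemeasurable hW.aemeasurable (hs id)
    _ ≤ ∫⁻ v, (μ.map fun ω i => Y i ω) {w | ∀ i, v i + w ⟨0, hk⟩ ≤ x} ∂μ.map fun ω i => X i ω :=
        lintegral_mono fun v => measure_forall_add_le_le_of_map_eval_eq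
          (fun i => by rw [hmarginal, hmarginal, hid]) v x
    _ = μ {ω | ∀ i, X i ω + Y ⟨0, hk⟩ ω ≤ x} :=
        (hindep.measure_preimage_eq_lintegral hV.aemeasurable hW.aemeasurable
          (hs fun _ => ⟨0, hk⟩)).symm
end

section
/- Let X be a real random variable with Cramér rate function I(x) = sup_{λ∈ℝ} (λx - log E[e^{λX}]). If there exists x ∈ ℝ with I(x) < ∞ and I(x+ε) = ∞ for all ε > 0, then P(X > x) = 0. -/
/-!
If `X` charged `(x, ∞)`, it would charge `[a, ∞)` for some `a > x`. Then for every `y ∈ [x, a]`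
each term of the supremum defining `I(y)` is bounded: for `λ ≥ 0` the Chernoff bound
`E[e^{λX}] ≥ e^{λa} P(X ≥ a)` gives `λy - log E[e^{λX}] ≤ -log P(X ≥ a)`, and for `λ < 0` the term
is at most the corresponding term of `I(x)`. Hence `I(a) ≤ max (I(x), -log P(X ≥ a)) < ∞`.
-/

open MeasureTheory

/-- The Cramér rate function (Legendre transform of the log moment generating
function), valued in `EReal` so that it may be infinite. -/
noncomputable def cramerRate {Ω : Type*} [MeasurableSpace Ω] (μ : Measure Ω)
    (X : Ω → ℝ) (x : ℝ) : EReal :=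
  ⨆ l : ℝ, ((l * x : ℝ) : EReal) -
    ENNReal.log (∫⁻ ω, ENNReal.ofReal (Real.exp (l * X ω)) ∂μ)

section Cramer

variable {Ω : Type*} [MeasurableSpace Ω] {μ : Measure Ω} {X : Ω → ℝ}

lemma ofReal_exp_mul_measure_le_lintegral (hX : Measurable X) {l : ℝ} (hl : 0 ≤ l) (a : ℝ) :
    ENNReal.ofReal (Real.exp (l * a)) * μ {ω | a ≤ X ω} ≤
      ∫⁻ ω, ENNReal.ofReal (Real.exp (l * X ω)) ∂μ :=
  calc ENNReal.ofReal (Real.exp (l * a)) * μ {ω | a ≤ X ω}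
      = ∫⁻ _ in {ω | a ≤ X ω}, ENNReal.ofReal (Real.exp (l * a)) ∂μ :=
        (setLIntegral_const _ _).symm
    _ ≤ ∫⁻ ω in {ω | a ≤ X ω}, ENNReal.ofReal (Real.exp (l * X ω)) ∂μ :=
        setLIntegral_mono (by fun_prop) fun ω hω =>
          ENNReal.ofReal_le_ofReal (Real.exp_le_exp.2 (mul_le_mul_of_nonneg_left hω hl))
    _ ≤ ∫⁻ ω, ENNReal.ofReal (Real.exp (l * X ω)) ∂μ := setLIntegral_le_lintegral _ _

lemma cramerTerm_le_neg_log_measure [IsFiniteMeasure μ] (hX : Measurable X) {l y a : ℝ}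
    (hl : 0 ≤ l) (hya : y ≤ a) :
    ((l * y : ℝ) : EReal) - ENNReal.log (∫⁻ ω, ENNReal.ofReal (Real.exp (l * X ω)) ∂μ) ≤
      -ENNReal.log (μ {ω | a ≤ X ω}) := by
  set A := {ω | a ≤ X ω}
  by_cases hA : μ A = 0
  · simp [hA]
  rw [ENNReal.log_pos_real hA (measure_ne_top μ A)]
  have hlog : ((l * a + Real.log (μ A).toReal : ℝ) : EReal) ≤
      ENNReal.log (∫⁻ ω, ENNReal.ofReal (Real.exp (l * X ω)) ∂μ) := by
    calc ((l * a + Real.log (μ A).toReal : ℝ) : EReal)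
        = ENNReal.log (ENNReal.ofReal (Real.exp (l * a)) * μ A) := by
          rw [ENNReal.log_mul_add, ENNReal.log_ofReal_of_pos (Real.exp_pos _), Real.log_exp,
            ENNReal.log_pos_real hA (measure_ne_top μ A), EReal.coe_add]
      _ ≤ _ := ENNReal.log_monotone (ofReal_exp_mul_measure_le_lintegral hX hl a)
  refine (EReal.sub_le_sub le_rfl hlog).trans ?_
  rw [← EReal.coe_sub, ← EReal.coe_neg, EReal.coe_le_coe_iff]
  nlinarith

lemma cramerRate_le_max [IsFiniteMeasure μ] (hX : Measurable X) {x y a : ℝ}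
    (hxy : x ≤ y) (hya : y ≤ a) :
    cramerRate μ X y ≤ max (cramerRate μ X x) (-ENNReal.log (μ {ω | a ≤ X ω})) := by
  refine iSup_le fun l => ?_
  rcases le_or_gt 0 l with hl | hl
  · exact (cramerTerm_le_neg_log_measure hX hl hya).trans (le_max_right _ _)
  · exact le_max_of_le_left <| le_iSup_of_le l <|
      EReal.sub_le_sub (EReal.coe_le_coe_iff.2 (mul_le_mul_of_nonpos_left hxy hl.le)) le_rfl

lemma exists_lt_measure_le_ne_zero {x : ℝ} (h : μ {ω | x < X ω} ≠ 0) :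
    ∃ a, x < a ∧ μ {ω | a ≤ X ω} ≠ 0 := by
  contrapose! h
  refine measure_mono_null (fun ω (hω : x < X ω) => ?_)
    (measure_iUnion_null fun n : ℕ => h (x + 1 / (n + 1)) (lt_add_of_pos_right x (by positivity)))
  obtain ⟨n, hn⟩ := exists_nat_one_div_lt (sub_pos.2 hω)
  exact Set.mem_iUnion.2 ⟨n, show x + 1 / (n + 1) ≤ X ω by linarith⟩

end Cramer

theorem stmt6 {Ω : Type*} [MeasurableSpace Ω] (μ : Measure Ω) [IsProbabilityMeasure μ]
    (X : Ω → ℝ) (hX : Measurable X) (x : ℝ)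
    (hfin : cramerRate μ X x ≠ ⊤)
    (hinf : ∀ ε : ℝ, 0 < ε → cramerRate μ X (x + ε) = ⊤) :
    μ {ω | x < X ω} = 0 := by
  by_contra h
  obtain ⟨a, hxa, ha⟩ := exists_lt_measure_le_ne_zero h
  have htop : cramerRate μ X a = ⊤ := by simpa using hinf (a - x) (sub_pos.2 hxa)
  have hbound := cramerRate_le_max (μ := μ) hX hxa.le le_rfl
  rw [htop, top_le_iff, max_eq_top] at hbound
  rcases hbound with hx | ha'
  · exact hfin hx
  · exact ha (ENNReal.log_eq_bot_iff.1 (EReal.neg_eq_top_iff.1 ha'))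
end
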